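/- Let n be an integer and let (C, (d_i)_{i≥0}) be an ħ-series datum satisfying the convolution relations ∑_{a+b=i} d_a ∘ d_b = 0 for all i ≥ 0, with associated ħ-series complex (̃C, d). If the cochain complex (C, d_0) is acyclic (ker d_0 = im d_0 in every degree), then (̃C, d) is acyclic: for every integer m and every v ∈ ̃C^m with d(v) = 0 there exists w ∈ ̃C^{m−1} with d(w) = v. -/

import Mathlib

open Finset

/-- Transport an element along an equality of degrees. -/
def degTr (C : ℤ → Type) [∀ k, AddCommGroup (C k)] [∀ k, Module ℚ (C k)]
    {k k' : ℤ} (h : k = k') : C k →ₗ[ℚ] C k' := by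
  subst h; exact LinearMap.id

/-- The degree-`m` piece of the ħ-series complex: formal series `∑_{j ≥ 0} c_j ħ^j`
with `c_j ∈ C^{m + (n-2)j}` (here `|ħ| = 2 - n`). -/
def TildeC (n : ℤ) (C : ℤ → Type) (m : ℤ) : Type :=
  ∀ j : ℕ, C (m + (n - 2) * j)

instance (n : ℤ) (C : ℤ → Type) [∀ k, AddCommGroup (C k)] (m : ℤ) :
    AddCommGroup (TildeC n C m) :=
  inferInstanceAs (AddCommGroup (∀ j : ℕ, C (m + (n - 2) * j)))

instance (n : ℤ) (C : ℤ → Type) [∀ k, AddCommGroup (C k)] [∀ k, Module ℚ (C k)] (m : ℤ) :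
    Module ℚ (TildeC n C m) :=
  inferInstanceAs (Module ℚ (∀ j : ℕ, C (m + (n - 2) * j)))

/-- The degree-one map `d = d₀ + d₁ħ + d₂ħ² + ⋯` of the ħ-series complex:
`d(∑ c_j ħ^j) = ∑ (∑_{a+b=j} d_a(c_b)) ħ^j`. -/
def seriesD (n : ℤ) (C : ℤ → Type) [∀ k, AddCommGroup (C k)] [∀ k, Module ℚ (C k)]
    (d : ∀ (i : ℕ) (k : ℤ), C k →ₗ[ℚ] C (k + 1 + (n - 2) * i))
    (m : ℤ) (v : TildeC n C m) : TildeC n C (m + 1) :=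
  fun j =>
    ∑ p ∈ (antidiagonal j).attach,
      degTr C
        (by
          have h : ((p.1.1 : ℤ) + (p.1.2 : ℤ)) = (j : ℤ) := by
            exact_mod_cast mem_antidiagonal.mp p.2
          linear_combination (n - 2) * h)
        (d p.1.1 (m + (n - 2) * p.1.2) (v p.1.2))

/-- The convolution relations `∑_{a+b=i} d_a ∘ d_b = 0` (as maps `C → C`),
beginning with `d₀² = 0`, `d₁d₀ + d₀d₁ = 0`, …. -/
def convRel (n : ℤ) (C : ℤ → Type) [∀ k, AddCommGroup (C k)] [∀ k, Module ℚ (C k)]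
    (d : ∀ (i : ℕ) (k : ℤ), C k →ₗ[ℚ] C (k + 1 + (n - 2) * i)) : Prop :=
  ∀ (i : ℕ) (k : ℤ) (x : C k),
    (∑ p ∈ (antidiagonal i).attach,
        degTr C
          (by
            have h : ((p.1.1 : ℤ) + (p.1.2 : ℤ)) = (i : ℤ) := by
              exact_mod_cast mem_antidiagonal.mp p.2
            linear_combination (n - 2) * h)
          (d p.1.1 (k + 1 + (n - 2) * p.1.2) (d p.1.2 k x))) =
      (0 : C (k + 2 + (n - 2) * i))

/-- Transport of series along an equality of degrees. -/
def tildeTr (n : ℤ) (C : ℤ → Type) [∀ k, AddCommGroup (C k)] [∀ k, Module ℚ (C k)]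
    {m m' : ℤ} (h : m = m') (v : TildeC n C m) : TildeC n C m' :=
  fun j => degTr C (by rw [h]) (v j)

/-!
Filter `C̃` by the order in `ħ`. If `v` is closed and vanishes below order `k`, its coefficient
`v_k` is `d₀`-closed, hence `v_k = d₀ y`, and `v - d(y ħ^k)` is closed and vanishes below order
`k + 1`. The corrections `y ħ^k` add up coefficientwise (`C̃` is a direct product) to a primitive
of `v`. Closedness of the residuals is `d² = 0`, which is the convolution relations after
reassociating the double antidiagonal sum.
-/

theorem Finset.Nat.sum_antidiagonal_sum_antidiagonal_snd {M : Type*} [AddCommMonoid M] (j : ℕ)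
    (f : ℕ → ℕ → ℕ → M) :
    ∑ p ∈ antidiagonal j, ∑ q ∈ antidiagonal p.2, f p.1 q.1 q.2 =
      ∑ p ∈ antidiagonal j, ∑ q ∈ antidiagonal p.1, f q.1 q.2 p.2 := by
  simp only [Finset.sum_sigma']
  apply Finset.sum_nbij' (fun x => ⟨(x.1.1 + x.2.1, x.2.2), (x.1.1, x.2.1)⟩)
    (fun x => ⟨(x.2.1, x.2.2 + x.1.2), (x.2.2, x.1.2)⟩) <;>
    simp +contextual [Finset.mem_sigma, ← add_assoc]
  omega

section Transport

variable (C : ℤ → Type) [∀ k, AddCommGroup (C k)] [∀ k, Module ℚ (C k)]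

/-- Like `degTr`, but with the junk value `0` when `k ≠ k'`: needing no proof of `k = k'`,
it lets the summands of an antidiagonal sum be written without membership proofs. -/
def degCast (k k' : ℤ) : C k →ₗ[ℚ] C k' :=
  if h : k = k' then degTr C h else 0

variable {C}

theorem degCast_of_eq {k k' : ℤ} (h : k = k') (x : C k) : degCast C k k' x = degTr C h x := by
  rw [degCast, dif_pos h]

@[simp]
theorem degCast_self (k : ℤ) (x : C k) : degCast C k k x = x := by
  rw [degCast_of_eq rfl]; rfl

theorem degCast_degCast {k k' : ℤ} (h : k = k') (k'' : ℤ) (x : C k) :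
    degCast C k' k'' (degCast C k k' x) = degCast C k k'' x := by
  subst h; rw [degCast_self]

theorem degCast_eq_zero_iff {k k' : ℤ} (h : k = k') (x : C k) : degCast C k k' x = 0 ↔ x = 0 := by
  subst h; rw [degCast_self]

theorem apply_degCast {n : ℤ} (d : ∀ (i : ℕ) (k : ℤ), C k →ₗ[ℚ] C (k + 1 + (n - 2) * i))
    (a : ℕ) (k k' : ℤ) (x : C k) :
    d a k' (degCast C k k' x) = degCast C _ _ (d a k x) := by
  by_cases h : k = k'
  · subst h; simp
  · have h' : k + 1 + (n - 2) * a ≠ k' + 1 + (n - 2) * a := fun h' => h (by linarith)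
    simp [degCast, h, h']

end Transport

/-- The monomial `c ħ^k`. -/
def TildeC.monomial {n : ℤ} {C : ℤ → Type} [∀ k, AddCommGroup (C k)] {m : ℤ} (k : ℕ)
    (c : C (m + (n - 2) * k)) : TildeC n C m :=
  Pi.single k c

namespace TildeC

variable {n : ℤ} {C : ℤ → Type} [∀ k, AddCommGroup (C k)] {m : ℤ} {k : ℕ}
  (c : C (m + (n - 2) * k))

theorem monomial_apply_self : (monomial k c : TildeC n C m) k = c :=
  Pi.single_eq_same (M := fun j : ℕ => C (m + (n - 2) * j)) k c

theorem monomial_apply_of_ne {j : ℕ} (h : j ≠ k) : (monomial k c : TildeC n C m) j = 0 :=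
  Pi.single_eq_of_ne (M := fun j : ℕ => C (m + (n - 2) * j)) h c

end TildeC

section SeriesComplex

variable {n : ℤ} {C : ℤ → Type} [∀ k, AddCommGroup (C k)] [∀ k, Module ℚ (C k)]
  {d : ∀ (i : ℕ) (k : ℤ), C k →ₗ[ℚ] C (k + 1 + (n - 2) * i)} {m : ℤ}

theorem tildeTr_zero {m' : ℤ} (h : m = m') : tildeTr n C h (0 : TildeC n C m) = 0 := by
  subst h; rfl

theorem tildeTr_tildeTr {m' m'' : ℤ} (h : m = m') (h' : m' = m'') (v : TildeC n C m) :
    tildeTr n C h' (tildeTr n C h v) = tildeTr n C (h.trans h') v := by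
  subst h h'; rfl

theorem seriesD_tildeTr {m' : ℤ} (h : m = m') (v : TildeC n C m) :
    seriesD n C d m' (tildeTr n C h v) = tildeTr n C (by rw [h]) (seriesD n C d m v) := by
  subst h; rfl

theorem seriesD_apply (v : TildeC n C m) (j : ℕ) :
    seriesD n C d m v j =
      ∑ p ∈ antidiagonal j, degCast C _ _ (d p.1 (m + (n - 2) * p.2) (v p.2)) := by
  refine Eq.trans ?_ (Finset.sum_attach _ _)
  exact Finset.sum_congr rfl fun p _ => (degCast_of_eq _ _).symm

theorem convRel.sum_eq_zero (hconv : convRel n C d) (i : ℕ) (k : ℤ) (x : C k) :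
    ∑ p ∈ antidiagonal i, degCast C _ (k + 2 + (n - 2) * i)
      (d p.1 (k + 1 + (n - 2) * p.2) (d p.2 k x)) = 0 := by
  refine Eq.trans ?_ (hconv i k x)
  refine (Finset.sum_attach _ _).symm.trans ?_
  exact Finset.sum_congr rfl fun p _ => degCast_of_eq _ _

theorem seriesD_add (v w : TildeC n C m) :
    seriesD n C d m (v + w) = seriesD n C d m v + seriesD n C d m w := by
  funext j
  change _ = seriesD n C d m v j + seriesD n C d m w j
  simp only [seriesD_apply, ← Finset.sum_add_distrib]
  exact Finset.sum_congr rfl fun p _ => by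
    rw [show (v + w) p.2 = v p.2 + w p.2 from rfl, map_add, map_add]

theorem seriesD_sub (v w : TildeC n C m) :
    seriesD n C d m (v - w) = seriesD n C d m v - seriesD n C d m w :=
  (AddMonoidHom.mk' (seriesD n C d m) seriesD_add).map_sub v w

theorem seriesD_zero : seriesD n C d m 0 = 0 :=
  (AddMonoidHom.mk' (seriesD n C d m) seriesD_add).map_zero

theorem seriesD_apply_congr {v w : TildeC n C m} {j : ℕ} (h : ∀ b ≤ j, v b = w b) :
    seriesD n C d m v j = seriesD n C d m w j := by
  simp only [seriesD_apply]
  exact Finset.sum_congr rfl fun p hp => by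
    rw [h p.2 (HasAntidiagonal.antidiagonal.snd_le hp)]

theorem seriesD_apply_of_forall_lt_eq_zero {v : TildeC n C m} {j : ℕ}
    (h : ∀ b < j, v b = 0) :
    seriesD n C d m v j = degCast C _ _ (d 0 (m + (n - 2) * j) (v j)) := by
  rw [seriesD_apply, Finset.sum_eq_single_of_mem (0, j) (by simp)]
  intro p hp hne
  have hlt : p.2 < j := by
    have := mem_antidiagonal.mp hp
    have : p.1 ≠ 0 := fun h0 => hne (Prod.ext h0 (by omega))
    omega
  rw [h p.2 hlt, map_zero, map_zero]

theorem seriesD_monomial_apply_of_lt {k j : ℕ} (c : C (m + (n - 2) * k)) (h : j < k) :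
    seriesD n C d m (TildeC.monomial k c) j = 0 := by
  rw [seriesD_apply_congr (w := 0) fun b hb => TildeC.monomial_apply_of_ne c (by omega),
    seriesD_zero]
  rfl

theorem seriesD_monomial_apply_self (k : ℕ) (c : C (m + (n - 2) * k)) :
    seriesD n C d m (TildeC.monomial k c) k = degCast C _ _ (d 0 (m + (n - 2) * k) c) := by
  rw [seriesD_apply_of_forall_lt_eq_zero fun b hb => TildeC.monomial_apply_of_ne c hb.ne,
    TildeC.monomial_apply_self]

theorem d_zero_apply_eq_zero_of_seriesD_eq_zero {v : TildeC n C m} (hv : seriesD n C d m v = 0)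
    {k : ℕ} (h : ∀ b < k, v b = 0) : d 0 (m + (n - 2) * k) (v k) = 0 := by
  have hk : seriesD n C d m v k = 0 := congrFun hv k
  rw [seriesD_apply_of_forall_lt_eq_zero h] at hk
  exact (degCast_eq_zero_iff (by push_cast; ring) _).mp hk

theorem seriesD_seriesD (hconv : convRel n C d) (v : TildeC n C m) :
    seriesD n C d (m + 1) (seriesD n C d m v) = 0 := by
  funext j
  let f (a c e : ℕ) : C (m + 1 + 1 + (n - 2) * j) :=
    degCast C _ _ (d a (m + (n - 2) * e + 1 + (n - 2) * c) (d c (m + (n - 2) * e) (v e)))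
  have hexpand : seriesD n C d (m + 1) (seriesD n C d m v) j =
      ∑ p ∈ antidiagonal j, ∑ q ∈ antidiagonal p.2, f p.1 q.1 q.2 := by
    rw [seriesD_apply]
    refine Finset.sum_congr rfl fun p _ => ?_
    rw [seriesD_apply, map_sum, map_sum]
    refine Finset.sum_congr rfl fun q hq => ?_
    have hq : (q.1 + q.2 : ℤ) = p.2 := by exact_mod_cast mem_antidiagonal.mp hq
    rw [apply_degCast, degCast_degCast (by linear_combination (n - 2) * hq)]
  have hinner : ∀ p ∈ antidiagonal j, ∑ q ∈ antidiagonal p.1, f q.1 q.2 p.2 = 0 := by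
    intro p _
    rw [← map_zero (degCast C _ (m + 1 + 1 + (n - 2) * j)),
      ← hconv.sum_eq_zero p.1 (m + (n - 2) * p.2) (v p.2), map_sum]
    refine Finset.sum_congr rfl fun q hq => (degCast_degCast ?_ _ _).symm
    have hq : (q.1 + q.2 : ℤ) = p.1 := by exact_mod_cast mem_antidiagonal.mp hq
    linear_combination (n - 2) * hq
  rw [hexpand, Finset.Nat.sum_antidiagonal_sum_antidiagonal_snd, Finset.sum_eq_zero hinner]
  rfl

end SeriesComplex

section Primitive

variable {n : ℤ} {C : ℤ → Type} [∀ k, AddCommGroup (C k)] [∀ k, Module ℚ (C k)]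
  (d : ∀ (i : ℕ) (k : ℤ), C k →ₗ[ℚ] C (k + 1 + (n - 2) * i)) (σ : ∀ k, C k → C (k - 1))
  {m : ℤ} (v : TildeC n C (m + 1))

/-- The truncation `w₀ + w₁ħ + ⋯ + w_{k-1}ħ^{k-1}` of a primitive of `v`: each `w_k` is the
`σ`-primitive of the lowest coefficient of the residual `v - d(w₀ + ⋯ + w_{k-1}ħ^{k-1})`. -/
def approxPrimitive : ℕ → TildeC n C m
  | 0 => 0
  | k + 1 => approxPrimitive k +
      TildeC.monomial k (degCast C _ _ (σ _ ((v - seriesD n C d m (approxPrimitive k)) k)))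

variable {d σ v}

theorem approxPrimitive_apply_of_lt {j k : ℕ} (h : j < k) :
    approxPrimitive d σ v k j = approxPrimitive d σ v (j + 1) j := by
  induction k with
  | zero => omega
  | succ k ih =>
    rcases (Nat.lt_succ_iff_lt_or_eq.mp h) with h | rfl
    · rw [approxPrimitive, ← ih h]
      exact add_eq_left.mpr (TildeC.monomial_apply_of_ne _ h.ne)
    · rfl

theorem seriesD_approxPrimitive_apply (hconv : convRel n C d)
    (hσ : ∀ k x, d 0 k x = 0 → degCast C _ k (d 0 (k - 1) (σ k x)) = x)
    (hv : seriesD n C d (m + 1) v = 0) {j k : ℕ} (h : j < k) :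
    seriesD n C d m (approxPrimitive d σ v k) j = v j := by
  induction k generalizing j with
  | zero => omega
  | succ k ih =>
    set A := approxPrimitive d σ v k
    have hR : seriesD n C d (m + 1) (v - seriesD n C d m A) = 0 := by
      rw [seriesD_sub, hv, seriesD_seriesD hconv, sub_zero]
    have hRk : d 0 _ ((v - seriesD n C d m A) k) = 0 :=
      d_zero_apply_eq_zero_of_seriesD_eq_zero hR fun b hb => sub_eq_zero.mpr (ih hb).symm
    have hstep : seriesD n C d m (approxPrimitive d σ v (k + 1)) j =
        seriesD n C d m A j + seriesD n C d m (TildeC.monomial k _) j :=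
      congrFun (seriesD_add _ _) j
    rw [hstep]
    rcases (Nat.lt_succ_iff_lt_or_eq.mp h) with h | rfl
    · rw [ih h, seriesD_monomial_apply_of_lt _ h, add_zero]
    · rw [seriesD_monomial_apply_self, apply_degCast, degCast_degCast (by ring), hσ _ _ hRk]
      exact add_sub_cancel _ _

theorem exists_seriesD_eq_of_seriesD_eq_zero (hconv : convRel n C d)
    (hexact : ∀ (k : ℤ) (x : C k), d 0 k x = 0 →
      ∃ y : C (k - 1), degTr C (by push_cast; ring) (d 0 (k - 1) y) = x)
    (hv : seriesD n C d (m + 1) v = 0) : ∃ w : TildeC n C m, seriesD n C d m w = v := by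
  choose! σ hσ using hexact
  refine ⟨fun j => approxPrimitive d σ v (j + 1) j, funext fun j => ?_⟩
  rw [seriesD_apply_congr (w := approxPrimitive d σ v (j + 1))
    fun b hb => (approxPrimitive_apply_of_lt (by omega)).symm]
  exact seriesD_approxPrimitive_apply hconv
    (fun k x hx => (degCast_of_eq _ _).trans (hσ k x hx)) hv (Nat.lt_succ_self j)

end Primitive

/-- If the convolution relations hold and the cochain complex `(C, d₀)` is acyclic
(its kernel equals its image in every degree), then the ħ-series complex is
acyclic: every closed element is exact. -/
theorem tilde_acyclic_of_acyclic (n : ℤ) (C : ℤ → Type)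
    [∀ k, AddCommGroup (C k)] [∀ k, Module ℚ (C k)]
    (d : ∀ (i : ℕ) (k : ℤ), C k →ₗ[ℚ] C (k + 1 + (n - 2) * i))
    (hconv : convRel n C d)
    (hacyclic : ∀ (k : ℤ) (x : C k),
      d 0 k x = 0 ↔ ∃ y : C (k - 1), degTr C (by push_cast; ring) (d 0 (k - 1) y) = x) :
    ∀ (m : ℤ) (v : TildeC n C m), seriesD n C d m v = 0 →
      ∃ w : TildeC n C (m - 1),
        tildeTr n C (by ring) (seriesD n C d (m - 1) w) = v := by
  intro m v hv
  obtain ⟨w, hw⟩ := exists_seriesD_eq_of_seriesD_eq_zero hconv (fun k x => (hacyclic k x).mp)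
    (v := tildeTr n C (by ring : m = m - 1 + 1) v) (by rw [seriesD_tildeTr, hv, tildeTr_zero])
  exact ⟨w, by rw [hw, tildeTr_tildeTr]; rfl⟩
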